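/- arXiv:0909.5350 — 4 statements merged into one kernel-verified Lean document; each statement's English description precedes it below -/
import Mathlib

section
/- Let S be an n×n upper-triangular complex matrix with 1's on the diagonal, and for k = 1,…,n let E_k be the matrix with a single 1 in position (k,k). Define M_k = I - E_k(S + Sᵀ). Then S·M_1·M_2·⋯·M_n = -Sᵀ; in particular M_1·M_2·⋯·M_n = -S⁻¹·Sᵀ. -/
/-!
Write `A = S + Sᵀ` and let `P_k` be the diagonal projection onto the first `k` coordinates.
By induction on `k`, `S M_1 ⋯ M_k = S - P_k A`: the matrix whose first `k` rows are those of
`-Sᵀ` and whose remaining rows are those of `S`. Because `S` is unitriangular, the `k`-th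
column of this matrix is the `k`-th unit vector, so right multiplication by
`M_{k+1} = I - E_{k+1} A` just subtracts `E_{k+1} A`, turning the `(k+1)`-st row of `S` into
that of `-Sᵀ`. At `k = n` we get `S - A = -Sᵀ`, and `S` is invertible since `det S = 1`.
-/

open Matrix

lemma Matrix.mul_one_sub_single_mul_of_apply_col {R ι : Type*} [Ring R] [Fintype ι]
    [DecidableEq ι] {X A : Matrix ι ι R} {k : ι} (hX : ∀ i, X i k = if i = k then 1 else 0) :
    X * (1 - single k k 1 * A) = X - single k k 1 * A := by
  have hcol : X * single k k 1 = single k k 1 := by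
    ext i j
    rcases eq_or_ne j k with rfl | hj
    · simp [hX, single_apply, eq_comm]
    · rw [mul_single_apply_of_ne (hbj := hj), single_apply_of_col_ne _ _ hj.symm]
  rw [mul_sub, mul_one, ← mul_assoc, hcol]

lemma Matrix.isUnit_det_of_isUpperTriangular {R m : Type*} [CommRing R] [Fintype m]
    [LinearOrder m] {S : Matrix m m R} (hS : S.IsUpperTriangular) (hdiag : ∀ i, S i i = 1) :
    IsUnit S.det := by
  simp [det_of_isUpperTriangular hS, hdiag]

section

variable {R : Type*} [Ring R] {n : ℕ}

def monodromyFactor (S : Matrix (Fin n) (Fin n) R) (k : Fin n) : Matrix (Fin n) (Fin n) R :=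
  1 - single k k 1 * (S + Sᵀ)

def prefixProjection (n k : ℕ) : Matrix (Fin n) (Fin n) R :=
  diagonal fun i => if (i : ℕ) < k then 1 else 0

lemma prefixProjection_zero : (prefixProjection n 0 : Matrix (Fin n) (Fin n) R) = 0 := by
  simp [prefixProjection]

lemma prefixProjection_succ {k : ℕ} (hk : k < n) :
    (prefixProjection n (k + 1) : Matrix (Fin n) (Fin n) R) =
      prefixProjection n k + single ⟨k, hk⟩ ⟨k, hk⟩ 1 := by
  rw [← diagonal_single, prefixProjection, prefixProjection, diagonal_add]
  congr 1
  ext i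
  rcases eq_or_ne i ⟨k, hk⟩ with rfl | hi
  · simp
  · have : (i : ℕ) ≠ k := fun h => hi (Fin.ext h)
    simp [hi, Nat.le_iff_lt_or_eq, this]

lemma prefixProjection_self : (prefixProjection n n : Matrix (Fin n) (Fin n) R) = 1 := by
  ext i j
  simp [prefixProjection, diagonal_apply, one_apply]

variable {S : Matrix (Fin n) (Fin n) R}

lemma sub_prefixProjection_mul_apply_col (hS : S.IsUpperTriangular) (hdiag : ∀ i, S i i = 1)
    {k : ℕ} (hk : k < n) (i : Fin n) :
    (S - prefixProjection n k * (S + Sᵀ) : Matrix (Fin n) (Fin n) R) i ⟨k, hk⟩ =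
      if i = ⟨k, hk⟩ then 1 else 0 := by
  simp only [prefixProjection, Matrix.sub_apply, diagonal_mul, Matrix.add_apply, transpose_apply]
  rcases lt_trichotomy i ⟨k, hk⟩ with hi | rfl | hi
  · simp [Fin.lt_def.mp hi, hS hi, hi.ne]
  · simp [hdiag]
  · simp [hS hi, hi.ne', not_lt.mpr (Fin.lt_def.mp hi).le]

lemma mul_prod_take_monodromyFactor (hS : S.IsUpperTriangular) (hdiag : ∀ i, S i i = 1)
    {k : ℕ} (hk : k ≤ n) :
    S * (((List.finRange n).map (monodromyFactor S)).take k).prod =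
      S - prefixProjection n k * (S + Sᵀ) := by
  induction k with
  | zero => simp [prefixProjection_zero]
  | succ k ih =>
    have hk' : k < n := hk
    rw [List.prod_take_succ _ _ (by simpa), ← mul_assoc, ih hk'.le, List.getElem_map,
      List.getElem_finRange, Fin.cast_mk, monodromyFactor,
      mul_one_sub_single_mul_of_apply_col (sub_prefixProjection_mul_apply_col hS hdiag hk'),
      prefixProjection_succ hk', add_mul, sub_sub]

lemma mul_prod_monodromyFactor (hS : S.IsUpperTriangular) (hdiag : ∀ i, S i i = 1) :
    S * ((List.finRange n).map (monodromyFactor S)).prod = -Sᵀ := by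
  have h := mul_prod_take_monodromyFactor hS hdiag le_rfl
  rwa [List.take_of_length_le (by simp), prefixProjection_self, one_mul,
    sub_add_cancel_left] at h

end

theorem dubrovin_identity (n : ℕ) (S : Matrix (Fin n) (Fin n) ℂ)
    (hupper : ∀ i j : Fin n, j < i → S i j = 0)
    (hdiag : ∀ i : Fin n, S i i = 1) :
    S * ((List.finRange n).map
        (fun k => (1 : Matrix (Fin n) (Fin n) ℂ) -
          Matrix.single k k 1 * (S + Sᵀ))).prod = -Sᵀ ∧
    ((List.finRange n).map
        (fun k => (1 : Matrix (Fin n) (Fin n) ℂ) -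
          Matrix.single k k 1 * (S + Sᵀ))).prod = -(S⁻¹ * Sᵀ) := by
  have hS : S.IsUpperTriangular := fun i j h => hupper i j h
  have hprod : S * ((List.finRange n).map (monodromyFactor S)).prod = -Sᵀ :=
    mul_prod_monodromyFactor hS hdiag
  refine ⟨hprod, ?_⟩
  rw [← mul_neg, ← hprod,
    nonsing_inv_mul_cancel_left _ _ (isUnit_det_of_isUpperTriangular hS hdiag)]
  rfl
end

section
/- For the m×m matrix T(η) with entries T_{ii} = 1+η, T_{ij} = η for i < j, and T_{ij} = 1 for i > j, one has det(T(η)) = 1 + η + η² + ⋯ + η^m. -/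
/-!
Write `T(η) = A + η 𝟙𝟙ᵀ`, where `A` is unit lower triangular with every entry below the diagonal
equal to `1 - η`. Since `(1 - η)(1 + η + ⋯ + η^(i-1)) = 1 - η^i`, the matrix `A` maps the vector
`x = (η^j)_j` to `𝟙`, so `T(η) = A (1 + x ηᵀ)`, and the matrix determinant lemma gives
`det T(η) = 1 + η (1 + η + ⋯ + η^(m-1))`.
-/

open Matrix Finset

section
variable {R : Type*} [CommRing R] {m : ℕ}

def unitLowerTriangularConst (c : R) : Matrix (Fin m) (Fin m) R :=
  of fun i j => if i = j then 1 else if i < j then 0 else c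

theorem det_unitLowerTriangularConst (c : R) :
    (unitLowerTriangularConst (m := m) c).det = 1 := by
  rw [det_of_isLowerTriangular _ fun i j (hij : i < j) => by
    simp [unitLowerTriangularConst, hij.ne, hij]]
  simp [unitLowerTriangularConst]

theorem unitLowerTriangularConst_one_sub_mulVec_pow (η : R) :
    unitLowerTriangularConst (1 - η) *ᵥ (fun j : Fin m => η ^ (j : ℕ)) = 1 := by
  ext i
  have hsplit : ∀ k ∈ range m,
      (if (i : ℕ) = k then 1 else if (i : ℕ) < k then 0 else 1 - η) * η ^ k =
        (if (i : ℕ) = k then η ^ k else 0) + (if k < i then (1 - η) * η ^ k else 0) := by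
    intro k _
    split_ifs <;> first | omega | ring
  have hrange : (range m).filter (· < (i : ℕ)) = range i := by
    ext k
    simp only [mem_filter, mem_range]
    omega
  simp only [unitLowerTriangularConst, mulVec, dotProduct, of_apply, Fin.ext_iff, Fin.lt_def,
    Pi.one_apply]
  rw [Fin.sum_univ_eq_sum_range
      (fun k => (if (i : ℕ) = k then 1 else if (i : ℕ) < k then 0 else 1 - η) * η ^ k),
    sum_congr rfl hsplit, sum_add_distrib, sum_ite_eq, ← sum_filter, hrange, ← mul_sum,
    mul_neg_geom_sum]
  simp

theorem eq_unitLowerTriangularConst_mul (η : R) :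
    (of fun i j : Fin m => if i = j then 1 + η else if i < j then η else 1) =
      unitLowerTriangularConst (1 - η) *
        (1 + replicateCol Unit (fun j : Fin m => η ^ (j : ℕ)) * replicateRow Unit (fun _ => η)) := by
  rw [Matrix.mul_add, Matrix.mul_one, ← Matrix.mul_assoc, ← replicateCol_mulVec,
    unitLowerTriangularConst_one_sub_mulVec_pow]
  ext i j
  simp only [unitLowerTriangularConst, of_apply, Matrix.add_apply, Matrix.mul_apply,
    replicateCol_apply, replicateRow_apply, Pi.one_apply, one_mul, Fintype.sum_unique]
  split_ifs <;> ring

end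

theorem det_T_eta (m : ℕ) (η : ℂ) :
    (Matrix.of (fun i j : Fin m =>
      if i = j then 1 + η else if i < j then η else 1)).det
    = ∑ k ∈ Finset.range (m + 1), η ^ k := by
  rw [eq_unitLowerTriangularConst_mul, det_mul, det_unitLowerTriangularConst, one_mul,
    det_one_add_replicateCol_mul_replicateRow, dotProduct,
    Fin.sum_univ_eq_sum_range (fun k => η * η ^ k), sum_range_succ', pow_zero, add_comm]
  simp only [pow_succ']
end

section
/- Let M_h = -S̃⁻¹S̃ᵀ where S̃ is the m×m upper-triangular matrix with 1's on the diagonal and all entries above the diagonal equal to 1. Then the eigenvalues of M_h are exactly the primitive-like roots e^{2πik/(m+1)} for k = 1,…,m, each simple; in particular M_h^{m+1} = I. -/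
open Matrix Polynomial Finset

/-!
For `x ≠ 1` with `x ^ (m + 1) = 1`, the vector `v = (x ^ j)_j` satisfies `S̃ᵀ v = -x • S̃ v`,
because `(S̃ᵀ v)_i + x (S̃ v)_i = 1 + x + ⋯ + x ^ m = 0`; so `x` is an eigenvalue of
`M_h = -S̃⁻¹ S̃ᵀ`.
The `m` distinct nontrivial `(m + 1)`-st roots of unity thus exhaust the monic degree-`m`
characteristic polynomial, which hence divides `X ^ (m + 1) - 1`, and Cayley–Hamilton gives
`M_h ^ (m + 1) = 1`.
-/

theorem geom_sum_eq_zero_of_pow_eq_one {R : Type*} [CommRing R] [IsDomain R] {x : R} {n : ℕ}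
    (hx : x ≠ 1) (hxn : x ^ n = 1) : ∑ i ∈ range n, x ^ i = 0 := by
  have h := mul_geom_sum x n
  rw [hxn, sub_self] at h
  exact (mul_eq_zero.mp h).resolve_left (sub_ne_zero.mpr hx)

theorem Polynomial.Monic.eq_prod_X_sub_C_of_natDegree_le_card {R : Type*} [CommRing R]
    [IsDomain R] {p : R[X]} (hp : p.Monic) {s : Finset R} (hs : ∀ a ∈ s, p.IsRoot a)
    (hcard : p.natDegree ≤ s.card) : p = ∏ a ∈ s, (X - C a) := by
  have hroots : p.roots = s.val := roots_eq_of_natDegree_le_card_of_ne_zero hs hcard hp.ne_zero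
  have hdeg : Multiset.card p.roots = p.natDegree :=
    le_antisymm (card_roots' p) (by rwa [hroots])
  rw [← prod_multiset_X_sub_C_of_monic_of_roots_card_eq hp hdeg, hroots]
  rfl

theorem IsPrimitiveRoot.injOn_pow_Ico {R : Type*} [CommRing R] {ζ : R}
    {n a : ℕ} (hζ : IsPrimitiveRoot ζ n) : Set.InjOn (ζ ^ ·) (Ico a n) :=
  fun _ hi _ hj h => hζ.pow_inj (mem_Ico.mp hi).2 (mem_Ico.mp hj).2 h

theorem Polynomial.Monic.eq_prod_X_sub_C_pow_of_isPrimitiveRoot {R : Type*} [CommRing R]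
    [IsDomain R] {p : R[X]} (hp : p.Monic) {ζ : R} {n a : ℕ} (hζ : IsPrimitiveRoot ζ n)
    (hroot : ∀ k ∈ Ico a n, p.IsRoot (ζ ^ k)) (hdeg : p.natDegree ≤ n - a) :
    p = ∏ k ∈ Ico a n, (X - C (ζ ^ k)) := by
  classical
  refine (hp.eq_prod_X_sub_C_of_natDegree_le_card ?_ ?_).trans (prod_image hζ.injOn_pow_Ico)
  · simpa only [forall_mem_image] using hroot
  · rwa [card_image_of_injOn hζ.injOn_pow_Ico, Nat.card_Ico]

theorem IsPrimitiveRoot.X_pow_sub_one_eq_prod_range {R : Type*} [CommRing R] [IsDomain R] {ζ : R}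
    {n : ℕ} (hζ : IsPrimitiveRoot ζ n) (hn : 0 < n) :
    X ^ n - 1 = ∏ k ∈ range n, (X - C (ζ ^ k)) := by
  rw [range_eq_Ico]
  have hmonic : (X ^ n - 1 : R[X]).Monic := by simpa using monic_X_pow_sub_C (1 : R) hn.ne'
  refine hmonic.eq_prod_X_sub_C_pow_of_isPrimitiveRoot hζ ?_ ?_
  · intro k _
    rw [IsRoot, eval_sub, eval_pow, eval_X, eval_one, pow_right_comm, hζ.pow_eq_one, one_pow,
      sub_self]
  · rw [← C_1, natDegree_X_pow_sub_C]; rfl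

theorem Matrix.isRoot_charpoly_of_mulVec_eq_smul {n R : Type*} [Fintype n] [DecidableEq n]
    [CommRing R] [IsDomain R] {A : Matrix n n R} {μ : R} {v : n → R} (hv : v ≠ 0)
    (h : A *ᵥ v = μ • v) : A.charpoly.IsRoot μ := by
  rw [IsRoot, eval_charpoly, ← exists_mulVec_eq_zero_iff]
  refine ⟨v, hv, ?_⟩
  rw [sub_mulVec, h, scalar_apply, ← smul_one_eq_diagonal, smul_mulVec, one_mulVec, sub_self]

theorem Matrix.pow_eq_one_of_charpoly_dvd {n R : Type*} [Fintype n] [DecidableEq n]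
    [CommRing R] {A : Matrix n n R} {k : ℕ} (h : A.charpoly ∣ X ^ k - 1) : A ^ k = 1 := by
  obtain ⟨q, hq⟩ := h
  have := congrArg (aeval A) hq
  rw [map_mul, aeval_self_charpoly, zero_mul, map_sub, map_pow, aeval_X, map_one] at this
  exact sub_eq_zero.mp this

def upperOnes (m : ℕ) (R : Type*) [Zero R] [One R] : Matrix (Fin m) (Fin m) R :=
  of fun i j => if i ≤ j then 1 else 0

section upperOnes

variable {m : ℕ} {R : Type*} [CommRing R]

theorem det_upperOnes : (upperOnes m R).det = 1 := by
  rw [det_of_isUpperTriangular]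
  · simp [upperOnes]
  · exact fun i j hij => if_neg hij.not_ge

theorem upperOnes_mulVec_pow (x : R) (i : Fin m) :
    (upperOnes m R *ᵥ fun j => x ^ (j : ℕ)) i = ∑ j ∈ Ico (i : ℕ) m, x ^ j := by
  simp only [mulVec, dotProduct, upperOnes, of_apply, ite_mul, one_mul, zero_mul, Fin.le_def]
  rw [Fin.sum_univ_eq_sum_range (fun j => if (i : ℕ) ≤ j then x ^ j else 0), ← sum_filter]
  congr 1
  ext j
  simp only [mem_filter, mem_range, mem_Ico]
  omega

theorem transpose_upperOnes_mulVec_pow (x : R) (i : Fin m) :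
    ((upperOnes m R)ᵀ *ᵥ fun j => x ^ (j : ℕ)) i = ∑ j ∈ range (i + 1), x ^ j := by
  simp only [mulVec, dotProduct, transpose_apply, upperOnes, of_apply, ite_mul, one_mul, zero_mul,
    Fin.le_def]
  rw [Fin.sum_univ_eq_sum_range (fun j => if j ≤ (i : ℕ) then x ^ j else 0), ← sum_filter]
  congr 1
  ext j
  simp only [mem_filter, mem_range]
  omega

theorem transpose_upperOnes_mulVec_pow_eq (x : R) (hx : ∑ j ∈ range (m + 1), x ^ j = 0) :
    ((upperOnes m R)ᵀ *ᵥ fun j => x ^ (j : ℕ)) =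
      -x • (upperOnes m R *ᵥ fun j => x ^ (j : ℕ)) := by
  funext i
  have hsplit := sum_range_add_sum_Ico (fun j => x ^ j) (Nat.succ_le_succ i.isLt.le)
  have hshift : x * ∑ j ∈ Ico (i : ℕ) m, x ^ j = ∑ j ∈ Ico ((i : ℕ) + 1) (m + 1), x ^ j := by
    rw [mul_sum, ← sum_Ico_add']
    exact sum_congr rfl fun j _ => (pow_succ' x j).symm
  rw [Pi.smul_apply, smul_eq_mul, transpose_upperOnes_mulVec_pow, upperOnes_mulVec_pow, neg_mul,
    hshift]
  linear_combination hsplit.trans hx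

theorem neg_inv_mul_transpose_upperOnes_mulVec_pow (x : R) (hx : ∑ j ∈ range (m + 1), x ^ j = 0) :
    (-((upperOnes m R)⁻¹ * (upperOnes m R)ᵀ)) *ᵥ (fun j => x ^ (j : ℕ)) =
      x • fun j : Fin m => x ^ (j : ℕ) := by
  rw [neg_mulVec, ← mulVec_mulVec, transpose_upperOnes_mulVec_pow_eq x hx, mulVec_smul,
    mulVec_mulVec, nonsing_inv_mul _ (by rw [det_upperOnes]; exact isUnit_one), one_mulVec,
    neg_smul, neg_neg]

theorem charpoly_neg_inv_mul_transpose_upperOnes [IsDomain R] {ζ : R}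
    (hζ : IsPrimitiveRoot ζ (m + 1)) :
    (-((upperOnes m R)⁻¹ * (upperOnes m R)ᵀ)).charpoly = ∏ k ∈ Icc 1 m, (X - C (ζ ^ k)) := by
  rw [← Ico_add_one_right_eq_Icc]
  refine (charpoly_monic _).eq_prod_X_sub_C_pow_of_isPrimitiveRoot hζ (fun k hk => ?_)
    (by simp [charpoly_natDegree_eq_dim])
  obtain ⟨hk1, hkm⟩ := mem_Ico.mp hk
  have hgeom : ∑ j ∈ range (m + 1), (ζ ^ k) ^ j = 0 :=
    geom_sum_eq_zero_of_pow_eq_one (hζ.pow_ne_one_of_pos_of_lt (by omega) hkm)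
      (by rw [pow_right_comm, hζ.pow_eq_one, one_pow])
  refine isRoot_charpoly_of_mulVec_eq_smul (fun h => ?_)
    (neg_inv_mul_transpose_upperOnes_mulVec_pow _ hgeom)
  simpa using congrFun h ⟨0, by omega⟩

end upperOnes

theorem eigenvalues_Mh_roots_of_unity (m : ℕ)
    (S : Matrix (Fin m) (Fin m) ℂ)
    (hS : S = Matrix.of (fun i j : Fin m => if i ≤ j then 1 else 0)) :
    (-(S⁻¹ * Sᵀ)).charpoly =
      ∏ k ∈ Finset.Icc 1 m,
        (X - C (Complex.exp (2 * Real.pi * Complex.I * k / (m + 1)))) ∧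
    (-(S⁻¹ * Sᵀ)) ^ (m + 1) = 1 := by
  obtain rfl : S = upperOnes m ℂ := hS
  set ζ := Complex.exp (2 * Real.pi * Complex.I / (m + 1))
  have hζ : IsPrimitiveRoot ζ (m + 1) := by
    simpa [ζ] using Complex.isPrimitiveRoot_exp (m + 1) m.succ_ne_zero
  have hexp (k : ℕ) : Complex.exp (2 * Real.pi * Complex.I * k / (m + 1)) = ζ ^ k := by
    rw [← Complex.exp_nat_mul]
    ring_nf
  have hchar := charpoly_neg_inv_mul_transpose_upperOnes hζ
  simp_rw [hexp]
  refine ⟨hchar, pow_eq_one_of_charpoly_dvd ?_⟩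
  rw [hchar, hζ.X_pow_sub_one_eq_prod_range m.succ_pos]
  exact prod_dvd_prod_of_subset _ _ _ fun k hk => by simp only [mem_Icc, mem_range] at hk ⊢; omega
end

section
/- The braid transformation β_{i,i+1} defined on an upper-triangular matrix of variables by G̃_{i+1,j} = G_{i,j} for j > i+1, G̃_{j,i+1} = G_{j,i} for j < i, G̃_{i,j} = G_{i,j}G_{i,i+1} - G_{i+1,j} for j > i+1, G̃_{j,i} = G_{j,i}G_{i,i+1} - G_{j,i+1} for j < i, G̃_{i,i+1} = G_{i,i+1}, coincides with the matrix conjugation A ↦ B_{i,i+1}·A·B_{i,i+1}ᵀ on the matrix A with A_{kl} = G_{k,l} for k < l, A_{kk} = 1, A_{kl} = 0 for k > l, where B_{i,i+1} is the identity except for the block [[G_{i,i+1}, -1],[1,0]] in rows/columns i, i+1. -/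
open Matrix

theorem braid_action_matrix_form {R : Type*} [CommRing R]
    (n : ℕ) (i : ℕ) (hi : i + 1 < n) (G : Fin n → Fin n → R) :
    let ii : Fin n := ⟨i, Nat.lt_of_succ_lt hi⟩
    let ii1 : Fin n := ⟨i + 1, hi⟩
    let A : Matrix (Fin n) (Fin n) R :=
      Matrix.of (fun k l => if k < l then G k l else if k = l then 1 else 0)
    let B : Matrix (Fin n) (Fin n) R :=
      Matrix.of (fun k l =>
        if k = ii ∧ l = ii then G ii ii1
        else if k = ii ∧ l = ii1 then -1
        else if k = ii1 ∧ l = ii then 1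
        else if k = ii1 ∧ l = ii1 then 0
        else if k = l then 1 else 0)
    let M : Matrix (Fin n) (Fin n) R := B * A * Bᵀ
    (∀ j : Fin n, ii1 < j → M ii1 j = G ii j) ∧
    (∀ j : Fin n, j < ii → M j ii1 = G j ii) ∧
    (∀ j : Fin n, ii1 < j → M ii j = G ii j * G ii ii1 - G ii1 j) ∧
    (∀ j : Fin n, j < ii → M j ii = G j ii * G ii ii1 - G j ii1) ∧
    (M ii ii1 = G ii ii1) ∧
    (∀ k l : Fin n, k < l → k ≠ ii → k ≠ ii1 → l ≠ ii → l ≠ ii1 → M k l = G k l) ∧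
    (∀ k : Fin n, M k k = 1) ∧
    (∀ k l : Fin n, l < k → M k l = 0) := by
  intro ii ii1 A B M
  have hne : ii ≠ ii1 := by simp [ii, ii1, Fin.ext_iff]
  have hlt : ii < ii1 := by simp [ii, ii1, Fin.lt_def]
  have hB : ∀ k p : Fin n, B k p =
      (if k = ii then (if p = ii then G ii ii1 else if p = ii1 then -1 else 0)
       else if k = ii1 then (if p = ii then 1 else 0)
       else if k = p then 1 else 0) := by
    intro k p
    show (if k = ii ∧ p = ii then G ii ii1
        else if k = ii ∧ p = ii1 then -1
        else if k = ii1 ∧ p = ii then 1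
        else if k = ii1 ∧ p = ii1 then 0
        else if k = p then 1 else 0) = _
    by_cases hk : k = ii <;> by_cases hk1 : k = ii1 <;>
      by_cases hp : p = ii <;> by_cases hp1 : p = ii1 <;>
      simp_all [hne, Ne.symm hne] <;>
      first
        | exact fun h => absurd h.symm hp
        | exact fun h => absurd h.symm hp1
  have hBii : ∀ q, B ii q = if q = ii then G ii ii1 else if q = ii1 then -1 else 0 := by
    intro q; rw [hB]; simp
  have hBii1 : ∀ q, B ii1 q = if q = ii then 1 else 0 := by
    intro q; rw [hB]; simp [Ne.symm hne]
  have hBo : ∀ k q : Fin n, k ≠ ii → k ≠ ii1 → B k q = if k = q then 1 else 0 := by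
    intro k q h h1; rw [hB]; simp [h, h1]
  have hBA : ∀ k q, (B * A) k q =
      if k = ii then G ii ii1 * A ii q - A ii1 q
      else if k = ii1 then A ii q else A k q := by
    intro k q
    rw [mul_apply]
    by_cases hk : k = ii
    · subst hk
      have h : ∀ p, B ii p * A p q =
          (if ii = p then G ii ii1 * A ii q else 0) + (if ii1 = p then -(A p q) else 0) := by
        intro p
        rw [hBii]
        by_cases hp : p = ii
        · subst hp; simp [Ne.symm hne]
        · by_cases hp1 : p = ii1
          · subst hp1; simp [hne, Ne.symm hne, hp]
          · simp [hp, hp1, Ne.symm hp, Ne.symm hp1]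
      rw [Finset.sum_congr rfl fun p _ => h p, Finset.sum_add_distrib,
        Finset.sum_ite_eq, Finset.sum_ite_eq]
      simp [hne, sub_eq_add_neg]
    · by_cases hk1 : k = ii1
      · subst hk1
        have h : ∀ p, B ii1 p * A p q = (if ii = p then A p q else 0) := by
          intro p
          rw [hBii1]
          by_cases hp : p = ii
          · subst hp; simp
          · simp [hp, Ne.symm hp]
        rw [Finset.sum_congr rfl fun p _ => h p, Finset.sum_ite_eq]
        simp [hne, Ne.symm hne]
      · have h : ∀ p, B k p * A p q = (if k = p then A p q else 0) := by
          intro p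
          rw [hBo k p hk hk1]
          by_cases hp : k = p <;> simp [hp]
        rw [Finset.sum_congr rfl fun p _ => h p, Finset.sum_ite_eq]
        simp [hk, hk1]
  have hM : ∀ k l, M k l =
      if l = ii then G ii ii1 * (B * A) k ii - (B * A) k ii1
      else if l = ii1 then (B * A) k ii else (B * A) k l := by
    intro k l
    show (B * A * Bᵀ) k l = _
    rw [mul_apply]
    by_cases hl : l = ii
    · subst hl
      have h : ∀ q, (B * A) k q * Bᵀ q ii =
          (if ii = q then G ii ii1 * (B * A) k q else 0) +
            (if ii1 = q then -((B * A) k q) else 0) := by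
        intro q
        rw [transpose_apply, hBii]
        by_cases hq : q = ii
        · subst hq; simp [Ne.symm hne, mul_comm]
        · by_cases hq1 : q = ii1
          · subst hq1; simp [hne, Ne.symm hne, hq]
          · simp [hq, hq1, Ne.symm hq, Ne.symm hq1]
      rw [Finset.sum_congr rfl fun q _ => h q, Finset.sum_add_distrib,
        Finset.sum_ite_eq, Finset.sum_ite_eq]
      simp [hne, sub_eq_add_neg]
    · by_cases hl1 : l = ii1
      · subst hl1
        have h : ∀ q, (B * A) k q * Bᵀ q ii1 = (if ii = q then (B * A) k q else 0) := by
          intro q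
          rw [transpose_apply, hBii1]
          by_cases hq : q = ii
          · subst hq; simp
          · simp [hq, Ne.symm hq]
        rw [Finset.sum_congr rfl fun q _ => h q, Finset.sum_ite_eq]
        simp [hne, Ne.symm hne]
      · have h : ∀ q, (B * A) k q * Bᵀ q l = (if l = q then (B * A) k q else 0) := by
          intro q
          rw [transpose_apply, hBo l q hl hl1]
          by_cases hq : l = q <;> simp [hq]
        rw [Finset.sum_congr rfl fun q _ => h q, Finset.sum_ite_eq]
        simp [hl, hl1]
  have hA : ∀ k l : Fin n, A k l = if k < l then G k l else if k = l then 1 else 0 :=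
    fun _ _ => rfl
  clear_value A B M
  refine ⟨?_, ?_, ?_, ?_, ?_, ?_, ?_, ?_⟩
  · intro j hj
    have h1 : j ≠ ii := by intro h; subst h; exact absurd (hlt.trans hj) (lt_irrefl _)
    have h2 : j ≠ ii1 := ne_of_gt hj
    have h3 : ii < j := hlt.trans hj
    rw [hM, if_neg h1, if_neg h2, hBA, if_neg hne.symm, if_pos rfl, hA, if_pos h3]
  · intro j hj
    have h1 : j ≠ ii := ne_of_lt hj
    have h2 : j ≠ ii1 := ne_of_lt (hj.trans hlt)
    rw [hM, if_neg hne.symm, if_pos rfl, hBA, if_neg h1, if_neg h2, hA, if_pos hj]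
  · intro j hj
    have h1 : j ≠ ii := by intro h; subst h; exact absurd (hlt.trans hj) (lt_irrefl _)
    have h2 : j ≠ ii1 := ne_of_gt hj
    have h3 : ii < j := hlt.trans hj
    rw [hM, if_neg h1, if_neg h2, hBA, if_pos rfl]
    rw [hA, hA, if_pos h3, if_pos hj]
    ring
  · intro j hj
    have h1 : j ≠ ii := ne_of_lt hj
    have h2 : j ≠ ii1 := ne_of_lt (hj.trans hlt)
    rw [hM, if_pos rfl, hBA, if_neg h1, if_neg h2, hBA, if_neg h1, if_neg h2]
    rw [hA, hA, if_pos hj, if_pos (hj.trans hlt)]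
    ring
  · rw [hM, if_neg hne.symm, if_pos rfl, hBA, if_pos rfl]
    rw [hA, hA, if_neg (lt_irrefl ii), if_pos rfl, if_neg (lt_asymm hlt), if_neg hne.symm]
    ring
  · intro k l hkl hk hk1 hl hl1
    rw [hM, if_neg hl, if_neg hl1, hBA, if_neg hk, if_neg hk1, hA, if_pos hkl]
  · intro k
    by_cases hk : k = ii
    · subst hk
      rw [hM, if_pos rfl, hBA, if_pos rfl, hBA, if_pos rfl]
      rw [hA, hA, hA, hA, if_neg (lt_irrefl ii), if_pos rfl, if_neg (lt_asymm hlt),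
        if_neg hne.symm, if_pos hlt, if_neg (lt_irrefl ii1), if_pos rfl]
      ring
    · by_cases hk1 : k = ii1
      · subst hk1
        rw [hM, if_neg hne.symm, if_pos rfl, hBA, if_neg hne.symm, if_pos rfl, hA,
          if_neg (lt_irrefl ii), if_pos rfl]
      · rw [hM, if_neg hk, if_neg hk1, hBA, if_neg hk, if_neg hk1, hA,
          if_neg (lt_irrefl k), if_pos rfl]
  · intro k l hlk
    by_cases hl : l = ii
    · subst hl
      by_cases hk1 : k = ii1
      · subst hk1
        rw [hM, if_pos rfl, hBA, if_neg hne.symm, if_pos rfl, hBA, if_neg hne.symm, if_pos rfl]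
        rw [hA, hA, if_neg (lt_irrefl ii), if_pos rfl, if_pos hlt]
        ring
      · have hk : k ≠ ii := ne_of_gt hlk
        have h4 : ii1 < k := by
          rw [Fin.lt_def] at hlk ⊢
          have : k.val ≠ i + 1 := fun h => hk1 (Fin.ext h)
          simp only [ii, ii1] at *
          omega
        rw [hM, if_pos rfl, hBA, if_neg hk, if_neg hk1, hBA, if_neg hk, if_neg hk1]
        rw [hA, hA, if_neg (lt_asymm hlk), if_neg hk, if_neg (lt_asymm h4), if_neg hk1]
        ring
    · by_cases hl1 : l = ii1
      · subst hl1
        have hk : k ≠ ii := fun h => absurd (h ▸ hlk) (lt_asymm hlt)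
        have hk1 : k ≠ ii1 := ne_of_gt hlk
        rw [hM, if_neg hne.symm, if_pos rfl, hBA, if_neg hk, if_neg hk1, hA,
          if_neg (lt_asymm (hlt.trans hlk)), if_neg hk]
      · rw [hM, if_neg hl, if_neg hl1, hBA]
        by_cases hk : k = ii
        · subst hk
          rw [if_pos rfl, hA, hA, if_neg (lt_asymm hlk), if_neg (Ne.symm hl),
            if_neg (lt_asymm (hlk.trans hlt)), if_neg (Ne.symm hl1)]
          ring
        · by_cases hk1 : k = ii1
          · subst hk1
            have h4 : l < ii := by
              rw [Fin.lt_def] at hlk ⊢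
              have : l.val ≠ i := fun h => hl (Fin.ext h)
              simp only [ii, ii1] at *
              omega
            rw [if_neg hk, if_pos rfl, hA, if_neg (lt_asymm h4), if_neg (Ne.symm hl)]
          · rw [if_neg hk, if_neg hk1, hA, if_neg (lt_asymm hlk), if_neg (ne_of_gt hlk)]
end
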